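/- arXiv:1912.10217 — 3 statements merged into one kernel-verified Lean document; each statement's English description precedes it below -/
import Mathlib

section
/- Let G ≤ Sym(Ω), let e be a G-invariant equivalence relation on Ω, and let Δ be a class of e. Then the restriction to Δ of the setwise stabilizer of Δ in the 2-closure G^(2) is contained in the 2-closure of the restriction G^Δ of the setwise stabilizer of Δ in G. -/
open MulAction

/-- The 2-closure of a permutation group `G ≤ Sym(Ω)`: all permutations of `Ω`
preserving every orbit of `G` on `Ω × Ω`. -/
def twoClosure {Ω : Type*} (G : Subgroup (Equiv.Perm Ω)) : Subgroup (Equiv.Perm Ω) where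
  carrier := {k | ∀ a b : Ω, (k a, k b) ∈ MulAction.orbit G ((a, b) : Ω × Ω)}
  one_mem' := by
    intro a b
    simp only [Equiv.Perm.one_apply]
    exact MulAction.mem_orbit_self ((a, b) : Ω × Ω)
  mul_mem' := by
    intro k l hk hl a b
    have h1 : ((l a, l b) : Ω × Ω) ∈ MulAction.orbit G ((a, b) : Ω × Ω) := hl a b
    have h2 := hk (l a) (l b)
    rw [(MulAction.orbit_eq_iff).2 h1] at h2
    simpa using h2
  inv_mem' := by
    intro k hk a b
    have h := hk (k⁻¹ a) (k⁻¹ b)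
    simp only [Equiv.Perm.coe_inv, Equiv.apply_symm_apply] at h
    have := (MulAction.orbit_eq_iff).2 h
    rw [this]
    exact MulAction.mem_orbit_self _

theorem le_twoClosure {Ω : Type*} (G : Subgroup (Equiv.Perm Ω)) : G ≤ twoClosure G := by
  intro g hg a b
  exact ⟨⟨g, hg⟩, rfl⟩

/-- The permutation group on `Δ` induced by the setwise stabilizer of `Δ` in `G`:
all permutations of `Δ` that agree on `Δ` with some element of `G`. -/
def restrictGroup {Ω : Type*} (G : Subgroup (Equiv.Perm Ω)) (Δ : Set Ω) :
    Subgroup (Equiv.Perm Δ) where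
  carrier := {σ | ∃ g ∈ G, ∀ x : Δ, (σ x : Ω) = g x}
  one_mem' := ⟨1, G.one_mem, by simp⟩
  mul_mem' := by
    rintro σ τ ⟨g, hg, hgs⟩ ⟨h, hh, hhs⟩
    refine ⟨g * h, G.mul_mem hg hh, fun x => ?_⟩
    show ((σ (τ x) : Ω)) = g (h (x : Ω))
    rw [hgs (τ x), hhs x]
  inv_mem' := by
    rintro σ ⟨g, hg, hgs⟩
    refine ⟨g⁻¹, G.inv_mem hg, fun x => ?_⟩
    have h := hgs (σ⁻¹ x)
    simp only [Equiv.Perm.coe_inv, Equiv.apply_symm_apply] at h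
    show ((σ⁻¹ x : Ω)) = g⁻¹ (x : Ω)
    rw [h]
    simp

/-!
An element `k` of `G^(2)` fixing the block `Δ` agrees on any pair `(a, b)` of points of `Δ` with
some `g ∈ G`. Since `G` permutes the classes of `e` and `g a = k a ∈ Δ`, this `g` maps the class
`Δ` of `a` onto itself, so its restriction lies in `G^Δ` and moves `(a, b)` to `(k a, k b)`.
-/

section InvariantSetoid

variable {Ω : Type*} {G : Subgroup (Equiv.Perm Ω)} {s : Setoid Ω}

theorem Setoid.rel_apply_iff_of_invariant
    (hinv : ∀ g ∈ G, ∀ a b : Ω, s.r a b → s.r (g a) (g b))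
    {g : Equiv.Perm Ω} (hg : g ∈ G) (a b : Ω) : s.r (g a) (g b) ↔ s.r a b := by
  refine ⟨fun h => ?_, hinv g hg a b⟩
  simpa using hinv g⁻¹ (G.inv_mem hg) _ _ h

theorem Setoid.rel_apply_iff_of_invariant_of_rel
    (hinv : ∀ g ∈ G, ∀ a b : Ω, s.r a b → s.r (g a) (g b))
    {g : Equiv.Perm Ω} (hg : g ∈ G) {a a₀ : Ω} (ha : s.r a a₀) (hga : s.r (g a) a₀)
    (x : Ω) : s.r (g x) a₀ ↔ s.r x a₀ :=
  calc s.r (g x) a₀ ↔ s.r (g x) (g a) := ⟨fun h => s.trans h (s.symm hga), fun h => s.trans h hga⟩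
    _ ↔ s.r x a := Setoid.rel_apply_iff_of_invariant hinv hg x a
    _ ↔ s.r x a₀ := ⟨fun h => s.trans h ha, fun h => s.trans h (s.symm ha)⟩

end InvariantSetoid

theorem subtypePerm_mem_restrictGroup {Ω : Type*} {G : Subgroup (Equiv.Perm Ω)} {Δ : Set Ω}
    {g : Equiv.Perm Ω} (hg : g ∈ G) (hgΔ : ∀ x, g x ∈ Δ ↔ x ∈ Δ) :
    Equiv.Perm.subtypePerm g hgΔ ∈ restrictGroup G Δ :=
  ⟨g, hg, fun _ => rfl⟩

theorem twoClosure_restrict_le_general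
    {Ω : Type*} (G : Subgroup (Equiv.Perm Ω)) (s : Setoid Ω)
    (hinv : ∀ g ∈ G, ∀ a b : Ω, s.r a b → s.r (g a) (g b))
    (a₀ : Ω) (Δ : Set Ω) (hΔ : Δ = {b | s.r b a₀}) :
    ∀ k ∈ twoClosure G, ∀ hk : ∀ x : Ω, x ∈ Δ ↔ k x ∈ Δ,
      Equiv.Perm.subtypePerm k (fun x => (hk x).symm) ∈ twoClosure (restrictGroup G Δ) := by
  subst hΔ
  intro k hkG hk a b
  obtain ⟨⟨g, hg⟩, hgab⟩ := hkG a b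
  have hga : g a = k a := congrArg Prod.fst hgab
  have hgb : g b = k b := congrArg Prod.snd hgab
  have hgΔ := Setoid.rel_apply_iff_of_invariant_of_rel hinv hg a.2 (hga ▸ (hk a).1 a.2)
  exact ⟨⟨_, subtypePerm_mem_restrictGroup hg hgΔ⟩, Prod.ext (Subtype.ext hga) (Subtype.ext hgb)⟩

/-- if `e` (the setoid `s`) is a `G`-invariant equivalence relation and
`Δ` is a class of `e`, then the restriction to `Δ` of (the setwise stabilizer of `Δ`
in) the 2-closure of `G` is contained in the 2-closure of the induced group `G^Δ`. -/
theorem twoClosure_restrict_le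
    {Ω : Type*} [Finite Ω] (G : Subgroup (Equiv.Perm Ω)) (s : Setoid Ω)
    (hinv : ∀ g ∈ G, ∀ a b : Ω, s.r a b → s.r (g a) (g b))
    (a₀ : Ω) (Δ : Set Ω) (hΔ : Δ = {b | s.r b a₀}) :
    ∀ k ∈ twoClosure G, ∀ hk : ∀ x : Ω, x ∈ Δ ↔ k x ∈ Δ,
      Equiv.Perm.subtypePerm k (fun x => (hk x).symm) ∈ twoClosure (restrictGroup G Δ) :=
  twoClosure_restrict_le_general G s hinv a₀ Δ hΔ
end

section
/- Let Δ be a set of prime cardinality p, and let G be a proper transitive subgroup of AGL_1(Δ) (the normalizer in Sym(Δ) of a regular cyclic subgroup of order p). Then G is 2-closed: every permutation of Δ preserving all orbits of G on Δ × Δ belongs to G. -/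
/-!
Label `Δ` by `ZMod p` via `i ↦ σ ^ i • a₀` for a generator `σ` of `C`. Then `C` becomes the
translations and `AGL₁(Δ)` the affine maps `x ↦ a * x + b`. A transitive `G ≤ AGL₁(p)` contains
every translation, so `G = T ⋊ H` where `H ≤ 𝔽ₚˣ` is the group of slopes of `G`, and `H` is proper
because `G` is. Any `k` in the 2-closure has all difference quotients
`(k x - k y) / (x - y)` in `H`, and `|H| ≤ (p - 1) / 2`.

Such a `k` is affine (McConnel's theorem, by the polynomial method). For `w ∉ H` the map
`x ↦ k x - w * x` is a bijection, so `∑ₓ (k x - w * x) ^ j = 0` for `j < p - 1`. As a polynomial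
in `w` of degree `j` with more than `j` roots, this sum vanishes identically, which kills every
moment `∑ₓ x ^ i * k x ^ s` with `s + i + |H| < p`. If the interpolating polynomial `f` of `k` had
degree `e ≥ 2`, then one such moment with `i + s * e = p - 1` would equal `-(lead f) ^ s ≠ 0`.
-/

open MulAction

open Polynomial Finset

namespace FiniteField

variable {K : Type*} [Field K] [Fintype K]

theorem sum_pow_eq_ite_of_lt {t : ℕ} (ht : t < 2 * (Fintype.card K - 1)) :
    ∑ x : K, x ^ t = if t = Fintype.card K - 1 then -1 else 0 := by
  classical
  set q := Fintype.card K
  have hq : 1 < q := Fintype.one_lt_card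
  rcases lt_trichotomy t (q - 1) with ht' | rfl | ht'
  · rw [sum_pow_lt_card_sub_one K t ht', if_neg ht'.ne]
  · rw [if_pos rfl, ← sum_erase_add _ _ (mem_univ 0), zero_pow (by omega), add_zero,
      sum_congr rfl fun x hx => pow_card_sub_one_eq_one x (ne_of_mem_erase hx), sum_const,
      card_erase_of_mem (mem_univ 0), card_univ, nsmul_one, Nat.cast_sub hq.le,
      FiniteField.cast_card_eq_zero, Nat.cast_one, zero_sub]
  · -- `x ^ q = x` lowers the exponent below `q - 1`
    have hlower : ∀ x : K, x ^ t = x ^ (t - (q - 1)) := fun x => by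
      conv_lhs => rw [show t = t - (q - 1) - 1 + q by omega, pow_add, pow_card]
      rw [← pow_succ, show t - (q - 1) - 1 + 1 = t - (q - 1) by omega]
    simp_rw [hlower]
    rw [sum_pow_lt_card_sub_one K _ (by omega), if_neg ht'.ne']

theorem sum_eval_eq_neg_coeff {f : K[X]} (hf : f.natDegree < 2 * (Fintype.card K - 1)) :
    ∑ x : K, f.eval x = -f.coeff (Fintype.card K - 1) := by
  simp_rw [eval_eq_sum_range' hf]
  rw [sum_comm]
  simp_rw [← mul_sum]
  rw [sum_congr rfl fun t ht => by rw [sum_pow_eq_ite_of_lt (mem_range.1 ht)]]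
  have hq : 1 < Fintype.card K := Fintype.one_lt_card
  simp only [mul_ite, mul_neg, mul_one, mul_zero, sum_ite_eq', mem_range]
  rw [if_pos (by omega)]

theorem sum_pow_mul_eval_pow_ne_zero {f : K[X]} (hf : f ≠ 0) {s i : ℕ}
    (h : i + s * f.natDegree = Fintype.card K - 1) :
    ∑ x : K, x ^ i * f.eval x ^ s ≠ 0 := by
  have hq : 1 < Fintype.card K := Fintype.one_lt_card
  have hdeg : (X ^ i * f ^ s).natDegree = Fintype.card K - 1 := by
    rw [natDegree_X_pow_mul _ (pow_ne_zero _ hf), natDegree_pow]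
    omega
  have hsum := sum_eval_eq_neg_coeff (f := X ^ i * f ^ s) (by omega)
  simp only [eval_mul, eval_pow, eval_X] at hsum
  rw [hsum, ← hdeg, coeff_natDegree, leadingCoeff_mul, leadingCoeff_X_pow, one_mul,
    leadingCoeff_pow, neg_ne_zero]
  exact pow_ne_zero _ (leadingCoeff_ne_zero.2 hf)

theorem sum_pow_eq_zero_of_injective {g : K → K} (hg : Function.Injective g) {j : ℕ}
    (hj : j < Fintype.card K - 1) : ∑ x, g x ^ j = 0 :=
  ((Equiv.ofBijective g hg.bijective_of_finite).sum_comp (· ^ j)).trans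
    (sum_pow_lt_card_sub_one K j hj)

theorem exists_natDegree_lt_card_eval_eq (k : K → K) :
    ∃ f : K[X], f.natDegree < Fintype.card K ∧ ∀ x, f.eval x = k x := by
  classical
  refine ⟨Lagrange.interpolate univ id k, ?_, fun x => by
    simpa using Lagrange.eval_interpolate_at_node k (Set.injOn_id _) (mem_univ x)⟩
  by_cases hf : Lagrange.interpolate univ id k = 0
  · rw [hf, natDegree_zero]
    exact Fintype.card_pos
  · rw [natDegree_lt_iff_degree_lt hf, ← card_univ]
    exact Lagrange.degree_interpolate_lt k (Set.injOn_id _)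

end FiniteField

theorem Nat.exists_add_mul_eq_of_two_mul_le {m e P : ℕ} (he : 2 ≤ e) (heP : e ≤ P)
    (hmP : 2 * m ≤ P) : ∃ s i, i + s * e = P ∧ s + i + m ≤ P := by
  rcases lt_or_ge m e with hme | hem
  · exact ⟨1, P - e, by omega, by omega⟩
  obtain ⟨d, rfl⟩ : ∃ d, e = d + 1 := ⟨e - 1, by omega⟩
  -- `s = ⌈m / d⌉`, the least `s` with `m ≤ s * d`
  obtain ⟨s, r, hsr, hr⟩ : ∃ s r, d * s + r + 1 = m + d ∧ r < d :=
    ⟨(m + d - 1) / d, (m + d - 1) % d, by have := Nat.div_add_mod (m + d - 1) d; omega,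
      Nat.mod_lt _ (by omega)⟩
  have hs : s + d ≤ m + 1 := by
    by_contra! h
    nlinarith [Nat.mul_le_mul_left d h.le]
  have hse : s * (d + 1) = d * s + s := by ring
  exact ⟨s, P - s * (d + 1), by omega, by omega⟩

namespace ZMod

variable {p : ℕ} [Fact p.Prime]

theorem sum_pow_mul_pow_eq_zero {M : Finset (ZMod p)} (hM : M.Nonempty) {k : ZMod p → ZMod p}
    (hk : ∀ w ∉ M, Function.Injective fun x => k x - w * x) {s i : ℕ}
    (hsi : s + i + #M < p) : ∑ x, x ^ i * k x ^ s = 0 := by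
  set j := s + i
  -- `Q w = ∑ x, (k x - w * x) ^ j` vanishes off `M`, which is too often for its degree
  set Q : (ZMod p)[X] := ∑ x, ((X + C (k x)) ^ j).comp (C (-x) * X)
  have hQdeg : Q.natDegree ≤ j := by
    refine natDegree_sum_le_of_forall_le _ _ fun x _ => natDegree_comp_le.trans ?_
    calc ((X + C (k x)) ^ j).natDegree * (C (-x) * X).natDegree ≤ j * 1 :=
          Nat.mul_le_mul (by rw [natDegree_pow, natDegree_X_add_C, mul_one])
            ((natDegree_C_mul_le _ _).trans natDegree_X_le)
      _ = j := mul_one j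
  have hQ : Q = 0 := by
    refine eq_zero_of_natDegree_lt_card_of_eval_eq_zero' Q (univ \ M) (fun w hw => ?_) ?_
    · have hw : w ∉ M := (mem_sdiff.1 hw).2
      simp only [Q, eval_finsetSum, eval_comp, eval_pow, eval_add, eval_X, eval_C, eval_mul]
      convert FiniteField.sum_pow_eq_zero_of_injective (hk w hw) (j := j)
        (by have := hM.card_pos; rw [ZMod.card]; omega)
        using 2
      ring
    · rw [card_sdiff_of_subset (subset_univ M), card_univ, ZMod.card]
      omega
  have hcoeff := congrArg (coeff · i) hQ
  simp only [Q, finsetSum_coeff, comp_C_mul_X_coeff, coeff_X_add_C_pow, coeff_zero] at hcoeff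
  have hchoose : (j.choose i : ZMod p) ≠ 0 := by
    rw [Ne, ZMod.natCast_eq_zero_iff]
    intro h
    have hfact : j.choose i ∣ j.factorial :=
      ⟨_, ((Nat.choose_mul_factorial_mul_factorial (Nat.le_add_left i s)).symm.trans
        (mul_assoc _ _ _))⟩
    exact absurd ((Nat.Prime.dvd_factorial Fact.out).1 (h.trans hfact)) (by omega)
  have hsum : (j.choose i : ZMod p) * (-1) ^ i * ∑ x, x ^ i * k x ^ s = 0 := by
    rw [← hcoeff, mul_sum, show j - i = s by omega]
    exact sum_congr rfl fun x _ => by ring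
  simpa [hchoose] using hsum

theorem exists_forall_eq_mul_add_of_forall_sub_eq_mul {M : Finset (ZMod p)} (hM : 2 * #M < p)
    {k : ZMod p → ZMod p} (hk : ∀ x y, x ≠ y → ∃ a ∈ M, k x - k y = a * (x - y)) :
    ∃ a ∈ M, ∃ b, ∀ x, k x = a * x + b := by
  obtain ⟨a, ha, h10⟩ := hk 1 0 one_ne_zero
  have hinj : ∀ w ∉ M, Function.Injective fun x => k x - w * x := by
    intro w hw x y hxy
    have hxy : k x - w * x = k y - w * y := hxy
    by_contra hne
    obtain ⟨c, hc, hcxy⟩ := hk x y hne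
    have : (c - w) * (x - y) = 0 := by linear_combination hxy - hcxy
    rcases mul_eq_zero.1 this with h | h
    · exact hw (sub_eq_zero.1 h ▸ hc)
    · exact hne (sub_eq_zero.1 h)
  obtain ⟨f, hfdeg, hf⟩ := FiniteField.exists_natDegree_lt_card_eval_eq k
  rw [ZMod.card] at hfdeg
  have hf1 : f.natDegree ≤ 1 := by
    by_contra! h
    obtain ⟨s, i, hsi, hsim⟩ :=
      Nat.exists_add_mul_eq_of_two_mul_le h (show f.natDegree ≤ p - 1 by omega)
        (show 2 * #M ≤ p - 1 by omega)
    apply FiniteField.sum_pow_mul_eval_pow_ne_zero (ne_zero_of_natDegree_gt h)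
      (by rwa [ZMod.card])
    simp_rw [hf]
    exact sum_pow_mul_pow_eq_zero ⟨a, ha⟩ hinj (by omega)
  have hlin : ∀ x, k x = f.coeff 1 * x + f.coeff 0 := fun x => by
    rw [← hf, eval_eq_sum_range' (show f.natDegree < 2 by omega)]
    simp only [sum_range_succ, sum_range_zero, pow_zero, pow_one]
    ring
  refine ⟨a, ha, f.coeff 0, fun x => ?_⟩
  rw [hlin, show f.coeff 1 = a by simpa [hlin] using h10]

theorem exists_forall_eq_mul_add_of_forall_sub_eq_mul_of_ne_top {H : Subgroup (ZMod p)ˣ}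
    (hH : H ≠ ⊤) {k : ZMod p → ZMod p}
    (hk : ∀ x y, x ≠ y → ∃ a ∈ H, k x - k y = a * (x - y)) :
    ∃ a ∈ H, ∃ b, ∀ x, k x = a * x + b := by
  classical
  set M : Finset (ZMod p) := (univ.filter (· ∈ H)).map ⟨Units.val, Units.val_injective⟩
  have hmem : ∀ a, a ∈ M ↔ ∃ u ∈ H, (u : ZMod p) = a := by simp [M]
  have hM : 2 * #M < p := by
    have hindex := H.card_mul_index
    rw [Nat.card_eq_fintype_card (α := (ZMod p)ˣ), ZMod.card_units] at hindex
    have hH2 : 2 ≤ H.index := H.one_lt_index_of_ne_top hH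
    have hMH : #M = Nat.card H := by
      rw [card_map, Nat.card_eq_fintype_card, Fintype.card_subtype]
    have := Nat.mul_le_mul_left (Nat.card H) hH2
    have := (Fact.out : p.Prime).two_le
    omega
  obtain ⟨a, ha, b, hab⟩ := exists_forall_eq_mul_add_of_forall_sub_eq_mul hM fun x y hxy => by
    obtain ⟨u, hu, h⟩ := hk x y hxy
    exact ⟨u, (hmem _).2 ⟨u, hu, rfl⟩, h⟩
  obtain ⟨u, hu, rfl⟩ := (hmem a).1 ha
  exact ⟨u, hu, b, hab⟩

end ZMod

theorem mem_twoClosure_iff {Ω : Type*} {G : Subgroup (Equiv.Perm Ω)} {k : Equiv.Perm Ω} :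
    k ∈ twoClosure G ↔ ∀ a b, ∃ g ∈ G, g a = k a ∧ g b = k b := by
  refine forall₂_congr fun a b => ?_
  simp only [MulAction.mem_orbit_iff, Subtype.exists, Prod.smul_mk, Prod.mk.injEq,
    Subgroup.mk_smul, Equiv.Perm.smul_def, exists_prop]

theorem Equiv.zpow_addRight {α : Type*} [AddGroup α] (a : α) (n : ℤ) :
    Equiv.addRight a ^ n = Equiv.addRight (n • a) :=
  Equiv.zpow_mulRight (α := Multiplicative α) (Multiplicative.ofAdd a) n

theorem Subgroup.mem_of_forall_apply_eq_add {α : Type*} [AddGroup α] {G : Subgroup (Equiv.Perm α)}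
    (hG : ∀ c, Equiv.addRight c ∈ G) {g k : Equiv.Perm α} (hg : g ∈ G) (c : α)
    (hk : ∀ x, k x = g x + c) : k ∈ G := by
  rw [show k = Equiv.addRight c * g from Equiv.ext hk]
  exact mul_mem (hG c) hg

namespace ZMod

open Equiv Subgroup

variable (p : ℕ) in
abbrev affineGroup : Subgroup (Perm (ZMod p)) :=
  normalizer (zpowers (Equiv.addRight (1 : ZMod p)) : Set (Perm (ZMod p)))

theorem apply_eq_mul_add_of_mem_affineGroup {p : ℕ} [NeZero p] {g : Perm (ZMod p)}
    (hg : g ∈ affineGroup p) (x : ZMod p) : g x = (g 1 - g 0) * x + g 0 := by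
  obtain ⟨n, hn⟩ := mem_zpowers_iff.1 ((mem_normalizer_iff.1 hg _).1 (mem_zpowers _))
  have hstep : ∀ y, g (y + 1) = g y + n := fun y => by
    simpa [Equiv.zpow_addRight] using (congrArg (· (g y)) hn).symm
  have hnat : ∀ m : ℕ, g m = g 0 + n * m := by
    intro m
    induction m with
    | zero => simp
    | succ m ih => rw [Nat.cast_succ, hstep, ih]; ring
  have hn1 : n = g 1 - g 0 := by
    rw [eq_sub_iff_add_eq', ← Nat.cast_one, hnat, Nat.cast_one, mul_one]
  rw [← ZMod.natCast_zmod_val x, hnat, hn1]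
  ring

variable {p : ℕ} [Fact p.Prime]

def slopeHom : affineGroup p →* (ZMod p)ˣ where
  toFun g := Units.mk0 (g.1 1 - g.1 0) (sub_ne_zero.2 (g.1.injective.ne one_ne_zero))
  map_one' := by ext; simp
  map_mul' g h := by
    ext
    simp only [Subgroup.coe_mul, Perm.mul_apply, Units.val_mk0, Units.val_mul]
    rw [apply_eq_mul_add_of_mem_affineGroup g.2 (h.1 1),
      apply_eq_mul_add_of_mem_affineGroup g.2 (h.1 0)]
    ring

theorem coe_slopeHom_apply (g : affineGroup p) : (slopeHom g : ZMod p) = g.1 1 - g.1 0 := rfl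

theorem addRight_mem_of_le_affineGroup {G : Subgroup (Perm (ZMod p))} (hle : G ≤ affineGroup p)
    (htrans : ∀ x y, ∃ g ∈ G, g x = y) (b : ZMod p) : Equiv.addRight b ∈ G := by
  -- `G` has at least `p > p - 1` elements, so its slope map has a nontrivial kernel
  have hslope : ¬ Function.Injective (slopeHom.comp (inclusion hle)) := fun hinj => by
    have h1 := Nat.card_le_card_of_injective _ hinj
    have h2 := Nat.card_le_card_of_surjective (fun g : G => g.1 0) fun y =>
      let ⟨g, hg, hgy⟩ := htrans 0 y
      ⟨⟨g, hg⟩, hgy⟩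
    rw [Nat.card_eq_fintype_card (α := (ZMod p)ˣ), ZMod.card_units] at h1
    rw [Nat.card_zmod] at h2
    have := (Fact.out : p.Prime).two_le
    omega
  rw [injective_iff_map_eq_one] at hslope
  push Not at hslope
  obtain ⟨g, hg1, hg⟩ := hslope
  have hslope1 : g.1 1 - g.1 0 = 1 := congrArg Units.val hg1
  set c := g.1 0
  have hgc : g.1 = Equiv.addRight c := Equiv.ext fun x => by
    rw [apply_eq_mul_add_of_mem_affineGroup (hle g.2), hslope1, one_mul, coe_addRight]
  have hc : c ≠ 0 := fun h => hg (Subtype.ext (by rw [hgc, h]; ext; simp))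
  have hpow : Equiv.addRight b = g.1 ^ ((b / c).val : ℤ) := by
    rw [hgc, Equiv.zpow_addRight, zsmul_eq_mul, Int.cast_natCast, ZMod.natCast_zmod_val,
      div_mul_cancel₀ _ hc]
  exact hpow ▸ zpow_mem g.2 _

theorem slopeHom_range_ne_top {G : Subgroup (Perm (ZMod p))} (hle : G ≤ affineGroup p)
    (hne : G ≠ affineGroup p) (hT : ∀ b, Equiv.addRight b ∈ G) :
    (slopeHom.comp (inclusion hle)).range ≠ ⊤ := fun htop => hne <| le_antisymm hle fun n hn => by
  obtain ⟨g, hg⟩ := htop ▸ mem_top (slopeHom ⟨n, hn⟩)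
  have hg : g.1 1 - g.1 0 = n 1 - n 0 := congrArg Units.val hg
  refine mem_of_forall_apply_eq_add hT g.2 (n 0 - g.1 0) fun x => ?_
  rw [apply_eq_mul_add_of_mem_affineGroup hn, apply_eq_mul_add_of_mem_affineGroup (hle g.2), hg]
  ring

theorem twoClosure_le_of_le_affineGroup {G : Subgroup (Perm (ZMod p))} (hle : G ≤ affineGroup p)
    (hne : G ≠ affineGroup p) (htrans : ∀ x y, ∃ g ∈ G, g x = y) : twoClosure G ≤ G := by
  intro k hk
  have hT := addRight_mem_of_le_affineGroup hle htrans
  obtain ⟨-, ⟨g, rfl⟩, b, hkb⟩ :=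
    exists_forall_eq_mul_add_of_forall_sub_eq_mul_of_ne_top (slopeHom_range_ne_top hle hne hT)
      (k := k) fun x y _ => by
        obtain ⟨g, hg, hgx, hgy⟩ := mem_twoClosure_iff.1 hk x y
        refine ⟨_, ⟨⟨g, hg⟩, rfl⟩, ?_⟩
        rw [← hgx, ← hgy, MonoidHom.comp_apply, coe_slopeHom_apply, coe_inclusion,
          apply_eq_mul_add_of_mem_affineGroup (hle hg) x,
          apply_eq_mul_add_of_mem_affineGroup (hle hg) y]
        ring
  refine mem_of_forall_apply_eq_add hT g.2 (b - g.1 0) fun x => ?_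
  rw [hkb, apply_eq_mul_add_of_mem_affineGroup (hle g.2), MonoidHom.comp_apply, coe_slopeHom_apply,
    coe_inclusion]
  ring

end ZMod

open Equiv Subgroup

theorem twoClosure_map_permCongrHom {α β : Type*} (e : α ≃ β) (G : Subgroup (Perm α)) :
    twoClosure (G.map e.permCongrHom.toMonoidHom) =
      (twoClosure G).map e.permCongrHom.toMonoidHom := by
  ext k
  rw [Subgroup.mem_map_equiv, mem_twoClosure_iff, mem_twoClosure_iff, ← e.forall_congr_right]
  refine forall_congr' fun a => ?_
  rw [← e.forall_congr_right]
  refine forall_congr' fun b => ?_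
  simp only [Subgroup.mem_map, exists_exists_and_eq_and, MulEquiv.coe_toMonoidHom,
    permCongrHom_coe, permCongr_apply, symm_apply_apply, permCongrHom_symm, symm_symm,
    e.eq_symm_apply]

theorem exists_equiv_zmod_map_zpowers_addRight_eq {Δ : Type*} {p : ℕ} [NeZero p]
    (hcard : Nat.card Δ = p) {C : Subgroup (Perm Δ)} (hC : Nat.card C = p) (hCcyc : IsCyclic C)
    (hCreg : ∀ a b : Δ, ∃ c ∈ C, c a = b) :
    ∃ e : ZMod p ≃ Δ, (zpowers (Equiv.addRight 1)).map e.permCongrHom.toMonoidHom = C := by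
  obtain ⟨⟨σ, hσC⟩, hσ⟩ := hCcyc.exists_generator
  have hCσ : C = zpowers σ := le_antisymm
    (fun c hc => let ⟨n, hn⟩ := mem_zpowers_iff.1 (hσ ⟨c, hc⟩); ⟨n, congrArg Subtype.val hn⟩)
    (zpowers_le.2 hσC)
  have hσp : σ ^ p = 1 := by
    simpa [hC] using congrArg Subtype.val (pow_card_eq_one' (x := (⟨σ, hσC⟩ : C)))
  have hval : ∀ n : ℤ, σ ^ ((n : ZMod p).val : ℤ) = σ ^ n := fun n => by
    rw [zpow_eq_zpow_iff_modEq]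
    refine ((ZMod.intCast_eq_intCast_iff _ _ _).1 ?_).of_dvd
      (Int.natCast_dvd_natCast.2 (orderOf_dvd_of_pow_eq_one hσp))
    simp
  obtain ⟨a₀⟩ : Nonempty Δ := (Nat.card_pos_iff.1 (hcard ▸ NeZero.pos p)).1
  set f : ZMod p → Δ := fun i => (σ ^ (i.val : ℤ)) a₀
  have hf : ∀ n : ℤ, f n = (σ ^ n) a₀ := fun n => by simp only [f, hval]
  have hsurj : Function.Surjective f := fun b => by
    obtain ⟨c, hc, rfl⟩ := hCreg a₀ b
    obtain ⟨n, rfl⟩ := mem_zpowers_iff.1 (hCσ ▸ hc)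
    exact ⟨n, hf n⟩
  have : Finite Δ := Nat.finite_of_card_ne_zero (hcard ▸ NeZero.ne p)
  set e := Equiv.ofBijective f (hsurj.bijective_of_nat_card_le (by rw [Nat.card_zmod, hcard]))
  refine ⟨e, ?_⟩
  rw [MonoidHom.map_zpowers, hCσ]
  congr 1
  ext y
  obtain ⟨i, rfl⟩ := e.surjective y
  have hshift : f (i + 1) = σ (f i) := by
    rw [show i + 1 = ((1 + i.val : ℤ) : ZMod p) by push_cast; rw [ZMod.natCast_zmod_val, add_comm],
      hf, zpow_one_add, Perm.mul_apply]
  simpa [e, permCongr_apply] using hshift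

theorem proper_transitive_subgroup_of_AGL1_is_two_closed_general
    {Δ : Type*} {p : ℕ} (hp : p.Prime) (hcard : Nat.card Δ = p)
    (C : Subgroup (Equiv.Perm Δ)) (hC : Nat.card C = p) (hCcyc : IsCyclic C)
    (hCreg : ∀ a b : Δ, ∃ c ∈ C, c a = b)
    (G : Subgroup (Equiv.Perm Δ))
    (hGle : G ≤ Subgroup.normalizer (C : Set (Equiv.Perm Δ))) (hGne : G ≠ Subgroup.normalizer (C : Set (Equiv.Perm Δ)))
    (hGtrans : ∀ a b : Δ, ∃ g ∈ G, g a = b) :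
    twoClosure G = G := by
  have : Fact p.Prime := ⟨hp⟩
  obtain ⟨e, rfl⟩ := exists_equiv_zmod_map_zpowers_addRight_eq hcard hC hCcyc hCreg
  rw [← map_equiv_normalizer_eq] at hGle hGne
  have hG : (G.comap e.permCongrHom.toMonoidHom).map e.permCongrHom.toMonoidHom = G :=
    map_comap_eq_self_of_surjective e.permCongrHom.surjective G
  refine le_antisymm ?_ (le_twoClosure G)
  rw [← hG, twoClosure_map_permCongrHom]
  refine map_mono (ZMod.twoClosure_le_of_le_affineGroup ?_ (fun h => hGne ?_) fun x y => ?_)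
  · exact (comap_mono hGle).trans_eq (comap_map_eq_self_of_injective e.permCongrHom.injective _)
  · rw [← hG, h]
  · obtain ⟨g, hg, hgxy⟩ := hGtrans (e x) (e y)
    refine ⟨e.permCongrHom.symm g, ?_, by simp [permCongr_apply, hgxy]⟩
    rwa [mem_comap, MulEquiv.coe_toMonoidHom, MulEquiv.apply_symm_apply]

/-- let `Δ` have prime cardinality `p`, let `C` be a regular cyclic
subgroup of `Sym(Δ)` of order `p`, so that `AGL₁(Δ)` is the normalizer of `C` in
`Sym(Δ)`.  Every proper transitive subgroup `G` of `AGL₁(Δ)` is 2-closed. -/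
theorem proper_transitive_subgroup_of_AGL1_is_two_closed
    {Δ : Type*} [Fintype Δ] {p : ℕ} (hp : p.Prime) (hcard : Nat.card Δ = p)
    (C : Subgroup (Equiv.Perm Δ)) (hC : Nat.card C = p) (hCcyc : IsCyclic C)
    (hCreg : ∀ a b : Δ, ∃ c ∈ C, c a = b)
    (G : Subgroup (Equiv.Perm Δ))
    (hGle : G ≤ Subgroup.normalizer (C : Set (Equiv.Perm Δ))) (hGne : G ≠ Subgroup.normalizer (C : Set (Equiv.Perm Δ)))
    (hGtrans : ∀ a b : Δ, ∃ g ∈ G, g a = b) :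
    twoClosure G = G :=
  proper_transitive_subgroup_of_AGL1_is_two_closed_general hp hcard C hC hCcyc hCreg G hGle hGne
    hGtrans
end

section
/- Let G be a supersolvable permutation group on Ω, let F = {e_0 ⊂ e_1 ⊂ ... ⊂ e_m} be a maximal normal G-flag, and let S = (G_{e_i})^{Ω_i} be an F-section of G. Then there is a prime p such that every orbit of S has cardinality exactly p. -/
/-- A group is supersolvable if it has a normal series (all terms normal in the
whole group) with cyclic factors; the cyclic-factor condition is phrased as: each
successive quotient is generated by one coset. -/
def IsSupersolvable (G : Type*) [Group G] : Prop :=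
  ∃ (n : ℕ) (c : Fin (n + 1) → Subgroup G),
    c 0 = ⊥ ∧ c (Fin.last n) = ⊤ ∧
    (∀ i : Fin n, c i.castSucc ≤ c i.succ) ∧
    (∀ i : Fin (n + 1), (c i).Normal) ∧
    (∀ i : Fin n, ∃ g ∈ c i.succ, ∀ x ∈ c i.succ, ∃ m : ℤ, (g ^ m)⁻¹ * x ∈ c i.castSucc)

/-- The subgroup of all permutations stabilizing every class of the equivalence
relation `s` setwise. -/
def classStab {Ω : Type*} (s : Setoid Ω) : Subgroup (Equiv.Perm Ω) where
  carrier := {g | ∀ a : Ω, s.r (g a) a}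
  one_mem' := fun a => s.refl' a
  mul_mem' := by
    intro g l hg hl a
    exact s.trans' (hg (l a)) (hl a)
  inv_mem' := by
    intro g hg a
    have := hg (g⁻¹ a)
    have h2 : g (g⁻¹ a) = a := by simp
    rw [h2] at this
    exact s.symm' this

/-!
Let `K` be the group induced by `G` on `Ω / e_{i-1}`. It is supersolvable, and the image of
`G_{e_i}` in it is a nontrivial normal subgroup (trivial only if `e_{i-1} = e_i`). A supersolvable
group has, inside any nontrivial normal subgroup, a cyclic normal subgroup (where the subgroup
first meets the cyclic normal series), and the elements of order dividing a prime `p` of that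
cyclic group form a normal subgroup `M` of order `p`. The `M`-orbits, pulled back to `Ω`, give a
normal `G`-invariant relation strictly above `e_{i-1}` and below `e_i`; by maximality it is `e_i`.
So the orbits of `G_{e_i}` on `Ω / e_{i-1}` are `M`-orbits, of size `1` or `p`.
-/

theorem IsSupersolvable.of_surjective {G K : Type*} [Group G] [Group K]
    (f : G →* K) (hf : Function.Surjective f) (h : IsSupersolvable G) : IsSupersolvable K := by
  obtain ⟨n, c, h0, hl, hmono, hnorm, hcyc⟩ := h
  refine ⟨n, fun j => (c j).map f, by simp [h0], by simp [hl, Subgroup.map_top_of_surjective f hf],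
    fun j => Subgroup.map_mono (hmono j), fun j => (hnorm j).map f hf, fun j => ?_⟩
  obtain ⟨g, hg, hgen⟩ := hcyc j
  refine ⟨f g, Subgroup.mem_map_of_mem f hg, ?_⟩
  rintro _ ⟨y, hy, rfl⟩
  obtain ⟨k, hk⟩ := hgen y hy
  exact ⟨k, by simpa using Subgroup.mem_map_of_mem f hk⟩

theorem Subgroup.isCyclic_of_inf_eq_bot {K : Type*} [Group K] {A B C : Subgroup K} [B.Normal]
    (hAC : A ≤ C) (hAB : A ⊓ B = ⊥) {g : K} (hgen : ∀ x ∈ C, ∃ k : ℤ, (g ^ k)⁻¹ * x ∈ B) :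
    IsCyclic A := by
  let f : A →* Subgroup.zpowers (g : K ⧸ B) :=
    ((QuotientGroup.mk' B).comp A.subtype).codRestrict _ fun x => by
      obtain ⟨k, hk⟩ := hgen x (hAC x.2)
      exact ⟨k, show ((g ^ k : K) : K ⧸ B) = (x : K) from QuotientGroup.eq.mpr hk⟩
  refine isCyclic_of_injective f fun x y hxy => ?_
  have hB : (x : K)⁻¹ * y ∈ A ⊓ B := Subgroup.mem_inf.mpr
    ⟨A.mul_mem (A.inv_mem x.2) y.2, QuotientGroup.eq.mp (congrArg Subtype.val hxy)⟩
  rw [hAB, Subgroup.mem_bot, inv_mul_eq_one] at hB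
  exact Subtype.ext hB

theorem IsSupersolvable.exists_isCyclic_normal_le {K : Type*} [Group K] (hK : IsSupersolvable K)
    {N : Subgroup K} [N.Normal] (hN : N ≠ ⊥) :
    ∃ A ≤ N, A.Normal ∧ A ≠ ⊥ ∧ IsCyclic A := by
  obtain ⟨n, c, h0, hl, -, hnorm, hcyc⟩ := hK
  obtain ⟨j, hj0, hj1⟩ : ∃ j : Fin n, N ⊓ c j.castSucc = ⊥ ∧ N ⊓ c j.succ ≠ ⊥ := by
    by_contra! hcon
    have hall : ∀ j : Fin (n + 1), N ⊓ c j = ⊥ := by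
      intro j
      induction j using Fin.induction with
      | zero => simp [h0]
      | succ j ih => exact hcon j ih
    exact hN (by simpa [hl] using hall (Fin.last n))
  obtain ⟨g, -, hgen⟩ := hcyc j
  have := hnorm j.castSucc
  have := hnorm j.succ
  refine ⟨N ⊓ c j.succ, inf_le_left, inferInstance, hj1,
    Subgroup.isCyclic_of_inf_eq_bot inf_le_right ?_ hgen⟩
  exact le_bot_iff.mp (hj0 ▸ inf_le_inf_right _ inf_le_left)

theorem Subgroup.exists_normal_prime_card_le_of_isCyclic {K : Type*} [Group K] [Finite K]
    {A : Subgroup K} [A.Normal] [IsCyclic A] (hA : A ≠ ⊥) :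
    ∃ M ≤ A, M.Normal ∧ (Nat.card M).Prime := by
  let _ : CommGroup A := IsCyclic.commGroup
  have hp : (Nat.card A).minFac.Prime := Nat.minFac_prime (by rwa [Ne, Subgroup.card_eq_one])
  refine ⟨(powMonoidHom (Nat.card A).minFac : A →* A).ker.map A.subtype, map_subtype_le _,
    ⟨?_⟩, ?_⟩
  · rintro _ ⟨x, hx, rfl⟩ k
    refine ⟨⟨k * x * k⁻¹, Subgroup.Normal.conj_mem ‹_› _ x.2 k⟩, ?_, rfl⟩
    rw [SetLike.mem_coe, MonoidHom.mem_ker, powMonoidHom_apply] at hx ⊢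
    ext
    simp [conj_pow, ← Subgroup.coe_pow, hx]
  · rwa [Subgroup.card_map_of_injective A.subtype_injective, IsCyclic.card_powMonoidHom_ker,
      Nat.gcd_eq_right (Nat.minFac_dvd _)]

theorem IsSupersolvable.exists_normal_prime_card_le {K : Type*} [Group K] [Finite K]
    (hK : IsSupersolvable K) {N : Subgroup K} [N.Normal] (hN : N ≠ ⊥) :
    ∃ M ≤ N, M.Normal ∧ (Nat.card M).Prime := by
  obtain ⟨A, hAN, _, hA, _⟩ := hK.exists_isCyclic_normal_le hN
  obtain ⟨M, hMA, hM⟩ := Subgroup.exists_normal_prime_card_le_of_isCyclic hA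
  exact ⟨M, hMA.trans hAN, hM⟩

section SetoidAction

open Equiv

variable {Ω : Type*}

def IsInvariantSetoid (G : Subgroup (Perm Ω)) (s : Setoid Ω) : Prop :=
  ∀ g ∈ G, ∀ a b : Ω, s.r a b → s.r (g a) (g b)

def IsNormalSetoid (G : Subgroup (Perm Ω)) (s : Setoid Ω) : Prop :=
  ∀ a b : Ω, s.r a b ↔ ∃ g ∈ G ⊓ classStab s, g a = b

variable {G : Subgroup (Perm Ω)} {s t : Setoid Ω}

theorem IsInvariantSetoid.classStab_subgroupOf_normal (ht : IsInvariantSetoid G t) :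
    ((classStab t).subgroupOf G).Normal where
  conj_mem h hh g a := by
    simpa using ht g g.2 _ _ (hh ((g : Perm Ω)⁻¹ a))

def IsInvariantSetoid.permHom (hs : IsInvariantSetoid G s) : G →* Perm (Quotient s) where
  toFun g := Quotient.congr g fun a b =>
    ⟨hs g g.2 a b, fun h => by simpa using hs _ (inv_mem g.2) _ _ h⟩
  map_one' := by ext q; induction q using Quotient.ind; rfl
  map_mul' g h := by ext q; induction q using Quotient.ind; rfl

@[simp]
theorem IsInvariantSetoid.permHom_mk (hs : IsInvariantSetoid G s) (g : G) (a : Ω) :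
    hs.permHom g (Quotient.mk s a) = Quotient.mk s ((g : Perm Ω) a) := rfl

end SetoidAction

section OrbitSetoid

open Equiv

variable {Ω : Type*} (s : Setoid Ω) (M : Type*) [Group M] [MulAction M (Quotient s)]

def orbitSetoid : Setoid Ω :=
  (MulAction.orbitRel M (Quotient s)).comap (Quotient.mk s)

variable {s M}

theorem orbitSetoid_iff {a b : Ω} :
    (orbitSetoid s M).r a b ↔ Quotient.mk s b ∈ MulAction.orbit M (Quotient.mk s a) :=
  MulAction.mem_orbit_symm

theorem le_orbitSetoid : s ≤ orbitSetoid s M := fun {_ _} h =>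
  orbitSetoid_iff.mpr ⟨1, (one_smul _ _).trans (Quotient.sound h)⟩

theorem orbitSetoid_ne [Nontrivial M] [FaithfulSMul M (Quotient s)] : orbitSetoid s M ≠ s := by
  intro h
  obtain ⟨w, hw⟩ := exists_ne (1 : M)
  obtain ⟨q, hq⟩ : ∃ q : Quotient s, w • q ≠ q := by
    by_contra! hfix
    exact hw (eq_of_smul_eq_smul fun q => by rw [hfix, one_smul])
  induction q using Quotient.ind with | _ a => ?_
  obtain ⟨b, hb⟩ := Quotient.exists_rep (w • Quotient.mk s a)
  have hab : (orbitSetoid s M).r a b := orbitSetoid_iff.mpr ⟨w, hb.symm⟩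
  rw [h] at hab
  exact hq (hb ▸ (Quotient.sound hab).symm)

theorem setOf_mk_classStab_eq_orbit {G : Subgroup (Perm Ω)} {t : Setoid Ω}
    (ht : IsNormalSetoid G t) (hMt : orbitSetoid s M = t) (a : Ω) :
    {x : Quotient s | ∃ g ∈ G ⊓ classStab t, x = Quotient.mk s (g a)} =
      MulAction.orbit M (Quotient.mk s a) := by
  ext x
  refine ⟨fun ⟨g, hg, hx⟩ => hx ▸ orbitSetoid_iff.mp (hMt ▸ (ht a _).mpr ⟨g, hg, rfl⟩),
    fun hx => ?_⟩
  obtain ⟨b, rfl⟩ := Quotient.exists_rep x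
  obtain ⟨g, hg, rfl⟩ := (ht a b).mp (hMt ▸ orbitSetoid_iff.mpr hx)
  exact ⟨g, hg, rfl⟩

end OrbitSetoid

namespace IsInvariantSetoid

open Equiv

variable {Ω : Type*} {G : Subgroup (Perm Ω)} {s t : Setoid Ω} (hs : IsInvariantSetoid G s)

-- The paper's `F`-section `(G_{e_i})^{Ω_i}`, seen inside the group induced by `G` on `Ω / s`.
def sectionSubgroup (t : Setoid Ω) : Subgroup hs.permHom.range :=
  ((classStab t).subgroupOf G).map hs.permHom.rangeRestrict

theorem sectionSubgroup_ne_bot (hst : s ≤ t) (hne : s ≠ t) (ht : IsNormalSetoid G t) :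
    hs.sectionSubgroup t ≠ ⊥ := by
  refine fun hbot => hne (le_antisymm hst fun {a b} hab => ?_)
  obtain ⟨g, hg, rfl⟩ := (ht a b).mp hab
  have hmem : hs.permHom.rangeRestrict ⟨g, hg.1⟩ ∈ hs.sectionSubgroup t :=
    Subgroup.mem_map_of_mem _ (Subgroup.mem_subgroupOf.mpr hg.2)
  rw [hbot, Subgroup.mem_bot] at hmem
  have hfix : hs.permHom ⟨g, hg.1⟩ (Quotient.mk s a) = Quotient.mk s a := by
    rw [show hs.permHom ⟨g, hg.1⟩ = 1 from congrArg Subtype.val hmem, Perm.one_apply]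
  exact s.symm' (Quotient.exact hfix)

variable (M : Subgroup hs.permHom.range)

theorem isInvariantSetoid_orbitSetoid [M.Normal] : IsInvariantSetoid G (orbitSetoid s M) := by
  intro g hg a b hab
  obtain ⟨w, hw⟩ := orbitSetoid_iff.mp hab
  let γ := hs.permHom.rangeRestrict ⟨g, hg⟩
  refine orbitSetoid_iff.mpr ⟨⟨γ * w * γ⁻¹, Subgroup.Normal.conj_mem ‹_› _ w.2 γ⟩, ?_⟩
  have hγ (x : Ω) : (γ : Perm (Quotient s)) (Quotient.mk s x) = Quotient.mk s (g x) := rfl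
  change (γ : Perm _) ((w : Perm _) ((γ : Perm _)⁻¹ (Quotient.mk s (g a)))) = _
  rw [← hγ a, Perm.coe_inv, symm_apply_apply, show (w : Perm _) (Quotient.mk s a) = _ from hw, hγ]

theorem isNormalSetoid_orbitSetoid (hsn : IsNormalSetoid G s) :
    IsNormalSetoid G (orbitSetoid s M) := by
  refine fun a b => ⟨fun hab => ?_, fun ⟨g, hg, hgab⟩ => hgab ▸ (orbitSetoid s M).symm' (hg.2 a)⟩
  obtain ⟨w, hw⟩ := orbitSetoid_iff.mp hab
  obtain ⟨g, hg⟩ := (w : hs.permHom.range).2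
  have hmove (x : Ω) : Quotient.mk s ((g : Perm Ω) x) = w • Quotient.mk s x := by
    rw [← hs.permHom_mk, hg]; rfl
  obtain ⟨h, hh, rfl⟩ := (hsn _ b).mp (Quotient.exact ((hmove a).trans hw))
  refine ⟨h * g, ⟨mul_mem hh.1 g.2, fun x => orbitSetoid_iff.mpr ⟨w⁻¹, ?_⟩⟩, rfl⟩
  rw [inv_smul_eq_iff, ← hmove]
  exact Quotient.sound (hh.2 _)

theorem orbitSetoid_le (hst : s ≤ t) (hM : M ≤ hs.sectionSubgroup t) : orbitSetoid s M ≤ t := by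
  intro a b hab
  obtain ⟨w, hw⟩ := orbitSetoid_iff.mp hab
  obtain ⟨h, hh, hhw⟩ := Subgroup.mem_map.mp (hM w.2)
  have hha : Quotient.mk s ((h : Perm Ω) a) = Quotient.mk s b := by
    rw [← hs.permHom_mk, ← hw]
    exact congrArg (fun γ : hs.permHom.range => (γ : Perm (Quotient s)) _) hhw
  exact t.trans' (t.symm' (Subgroup.mem_subgroupOf.mp hh a)) (hst (Quotient.exact hha))

end IsInvariantSetoid

theorem section_orbits_prime_general
    {Ω : Type*} [Finite Ω] (G : Subgroup (Equiv.Perm Ω)) (hss : IsSupersolvable G)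
    (m : ℕ) (e : Fin (m + 1) → Setoid Ω)
    -- `F` is a flag: from the identity relation up to the orbit partition, strictly increasing
    (hchain : ∀ i : Fin m, (∀ a b : Ω, (e i.castSucc).r a b → (e i.succ).r a b)
      ∧ e i.castSucc ≠ e i.succ)
    -- each `e_i` is `G`-invariant
    (hinv : ∀ i : Fin (m + 1), ∀ g ∈ G, ∀ a b : Ω, (e i).r a b → (e i).r (g a) (g b))
    -- the flag is normal: the orbits of `G_{e_i}` are exactly the classes of `e_i`
    (hnormal : ∀ i : Fin (m + 1), ∀ a b : Ω,
      (e i).r a b ↔ ∃ g ∈ G ⊓ classStab (e i), g a = b)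
    -- the flag is maximal: no normal `G`-invariant equivalence relation lies strictly
    -- between `e_{i-1}` and `e_i`
    (hmax : ∀ i : Fin m, ∀ s : Setoid Ω,
      (∀ g ∈ G, ∀ a b : Ω, s.r a b → s.r (g a) (g b)) →
      (∀ a b : Ω, s.r a b ↔ ∃ g ∈ G ⊓ classStab s, g a = b) →
      (∀ a b : Ω, (e i.castSucc).r a b → s.r a b) →
      (∀ a b : Ω, s.r a b → (e i.succ).r a b) →
      s = e i.castSucc ∨ s = e i.succ)
    (i : Fin m) :
    ∃ p : ℕ, p.Prime ∧ ∀ a : Ω,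
      (Set.ncard {x : Quotient (e i.castSucc) |
          ∃ g ∈ G ⊓ classStab (e i.succ), x = Quotient.mk (e i.castSucc) (g a)} ≠ 1 →
        Set.ncard {x : Quotient (e i.castSucc) |
          ∃ g ∈ G ⊓ classStab (e i.succ), x = Quotient.mk (e i.castSucc) (g a)} = p) := by
  have hs : IsInvariantSetoid G (e i.castSucc) := hinv _
  have hst : e i.castSucc ≤ e i.succ := fun {a b} => (hchain i).1 a b
  have : (hs.sectionSubgroup (e i.succ)).Normal :=
    (IsInvariantSetoid.classStab_subgroupOf_normal (hinv _)).map _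
      hs.permHom.rangeRestrict_surjective
  obtain ⟨M, hMS, hM, hMp⟩ := IsSupersolvable.exists_normal_prime_card_le
    (hss.of_surjective _ hs.permHom.rangeRestrict_surjective)
    (hs.sectionSubgroup_ne_bot hst (hchain i).2 (hnormal _))
  have : Nontrivial M := Finite.one_lt_card_iff_nontrivial.mp hMp.one_lt
  have hMe : orbitSetoid (e i.castSucc) M = e i.succ :=
    (hmax i _ (hs.isInvariantSetoid_orbitSetoid M) (hs.isNormalSetoid_orbitSetoid M (hnormal _))
      (fun _ _ h => le_orbitSetoid h) (fun _ _ h => hs.orbitSetoid_le M hst hMS h)).resolve_left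
      orbitSetoid_ne
  refine ⟨_, hMp, fun a => ?_⟩
  rw [setOf_mk_classStab_eq_orbit (hnormal _) hMe, ← MulAction.index_stabilizer]
  exact (hMp.eq_one_or_self_of_dvd _ (Subgroup.index_dvd_card _)).resolve_left

/-- let `G` be a supersolvable permutation group on `Ω`, let
`F = {e_0 ⊂ e_1 ⊂ ⋯ ⊂ e_m}` be a maximal normal `G`-flag, and for `1 ≤ i ≤ m` let
`S = (G_{e_i})^{Ω_i}` be the corresponding `F`-section, acting on the union `Ω_i` of
the non-singleton orbits of `G_{e_i}` on `Ω/e_{i-1}`.  Then there is a prime `p` such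
that every orbit of `S` has cardinality exactly `p` (equivalently, every
non-singleton orbit of `G_{e_i}` on `Ω/e_{i-1}` has cardinality `p`). -/
theorem section_orbits_prime
    {Ω : Type*} [Finite Ω] (G : Subgroup (Equiv.Perm Ω)) (hss : IsSupersolvable G)
    (m : ℕ) (e : Fin (m + 1) → Setoid Ω)
    -- `F` is a flag: from the identity relation up to the orbit partition, strictly increasing
    (hbot : ∀ a b : Ω, (e 0).r a b ↔ a = b)
    (htop : ∀ a b : Ω, (e (Fin.last m)).r a b ↔ b ∈ MulAction.orbit G a)
    (hchain : ∀ i : Fin m, (∀ a b : Ω, (e i.castSucc).r a b → (e i.succ).r a b)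
      ∧ e i.castSucc ≠ e i.succ)
    -- each `e_i` is `G`-invariant
    (hinv : ∀ i : Fin (m + 1), ∀ g ∈ G, ∀ a b : Ω, (e i).r a b → (e i).r (g a) (g b))
    -- the flag is normal: the orbits of `G_{e_i}` are exactly the classes of `e_i`
    (hnormal : ∀ i : Fin (m + 1), ∀ a b : Ω,
      (e i).r a b ↔ ∃ g ∈ G ⊓ classStab (e i), g a = b)
    -- the flag is maximal: no normal `G`-invariant equivalence relation lies strictly
    -- between `e_{i-1}` and `e_i`
    (hmax : ∀ i : Fin m, ∀ s : Setoid Ω,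
      (∀ g ∈ G, ∀ a b : Ω, s.r a b → s.r (g a) (g b)) →
      (∀ a b : Ω, s.r a b ↔ ∃ g ∈ G ⊓ classStab s, g a = b) →
      (∀ a b : Ω, (e i.castSucc).r a b → s.r a b) →
      (∀ a b : Ω, s.r a b → (e i.succ).r a b) →
      s = e i.castSucc ∨ s = e i.succ)
    (i : Fin m) :
    ∃ p : ℕ, p.Prime ∧ ∀ a : Ω,
      (Set.ncard {x : Quotient (e i.castSucc) |
          ∃ g ∈ G ⊓ classStab (e i.succ), x = Quotient.mk (e i.castSucc) (g a)} ≠ 1 →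
        Set.ncard {x : Quotient (e i.castSucc) |
          ∃ g ∈ G ⊓ classStab (e i.succ), x = Quotient.mk (e i.castSucc) (g a)} = p) :=
  section_orbits_prime_general G hss m e hchain hinv hnormal hmax i
end
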